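/- arXiv:2605.20222 — 5 statements merged into one kernel-verified Lean document; each statement's English description precedes it below -/
import Mathlib

section
/- Let P and H be n×n complex matrices with P Hermitian, P² = I, and H Hermitian, and let ψ ∈ ℂⁿ. Define f : ℝ → ℝ by f(a) = Re⟨exp(−i a P)ψ, H exp(−i a P)ψ⟩. Then there exist real constants c₀, c₁, c₂ such that f(a) = c₀ + c₁ cos(2a) + c₂ sin(2a) for all a ∈ ℝ. -/
/-! Since `P ^ 2 = 1`, the exponential series of `-(i a) • P` splits into its even and odd parts,
so `exp (-(i a) • P) = cos a • 1 - (i sin a) • P`. The expectation value is therefore a real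
quadratic form in `(cos a, sin a)`, and by the double-angle formulas every such form is
`c₀ + c₁ cos 2a + c₂ sin 2a`. -/

open scoped Matrix
open NormedSpace

section Involution

variable {𝔸 : Type*} [NormedRing 𝔸] [NormedAlgebra ℂ 𝔸] [CompleteSpace 𝔸]

theorem exp_smul_of_sq_eq_one {x : 𝔸} (hx : x ^ 2 = 1) (z : ℂ) :
    exp (z • x) = Complex.cosh z • (1 : 𝔸) + Complex.sinh z • x := by
  have h_even : HasSum (fun k : ℕ => ((2 * k).factorial⁻¹ : ℂ) • (z • x) ^ (2 * k))
      (Complex.cosh z • (1 : 𝔸)) := by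
    convert (Complex.hasSum_cosh z).smul_const (1 : 𝔸) using 2 with k
    rw [smul_pow, pow_mul x, hx, one_pow, smul_smul, div_eq_inv_mul]
  have h_odd :
      HasSum (fun k : ℕ => ((2 * k + 1).factorial⁻¹ : ℂ) • (z • x) ^ (2 * k + 1))
        (Complex.sinh z • x) := by
    convert (Complex.hasSum_sinh z).smul_const x using 2 with k
    rw [smul_pow, pow_succ x, pow_mul x, hx, one_pow, one_mul, smul_smul, div_eq_inv_mul]
  exact (exp_series_hasSum_exp' (𝕂 := ℂ) (z • x)).unique (h_even.even_add_odd h_odd)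

theorem exp_neg_I_mul_smul_of_sq_eq_one {x : 𝔸} (hx : x ^ 2 = 1) (θ : ℂ) :
    exp ((-(Complex.I * θ)) • x)
      = Complex.cos θ • (1 : 𝔸) + (-(Complex.I * Complex.sin θ)) • x := by
  rw [exp_smul_of_sq_eq_one hx, Complex.cosh_neg, Complex.sinh_neg, mul_comm,
    Complex.cosh_mul_I, Complex.sinh_mul_I, mul_comm]

end Involution

namespace Matrix

variable {n : Type*} [Fintype n]

theorem exp_neg_I_mul_smul_of_sq_eq_one [DecidableEq n] {P : Matrix n n ℂ} (hP : P ^ 2 = 1)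
    (θ : ℂ) :
    exp ((-(Complex.I * θ)) • P)
      = Complex.cos θ • (1 : Matrix n n ℂ) + (-(Complex.I * Complex.sin θ)) • P := by
  -- `exp` depends only on the topology, so any Banach-algebra norm on matrices will do.
  let _ := Matrix.linftyOpNormedRing (n := n) (α := ℂ)
  let _ := Matrix.linftyOpNormedAlgebra (n := n) (R := ℂ) (α := ℂ)
  exact _root_.exp_neg_I_mul_smul_of_sq_eq_one hP θ

theorem re_star_dotProduct_mulVec_real_smul_add_I_smul (H : Matrix n n ℂ) (ψ u : n → ℂ)
    (c s : ℝ) :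
    (star ((c : ℂ) • ψ + (-(Complex.I * s)) • u) ⬝ᵥ
        H *ᵥ ((c : ℂ) • ψ + (-(Complex.I * s)) • u)).re
      = c ^ 2 * (star ψ ⬝ᵥ H *ᵥ ψ).re
        + c * s * ((star ψ ⬝ᵥ H *ᵥ u).im - (star u ⬝ᵥ H *ᵥ ψ).im)
        + s ^ 2 * (star u ⬝ᵥ H *ᵥ u).re := by
  simp only [star_add, star_smul, mulVec_add, mulVec_smul, add_dotProduct, dotProduct_add,
    smul_dotProduct, dotProduct_smul, smul_eq_mul, RCLike.star_def, Complex.add_re,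
    Complex.add_im, Complex.mul_re, Complex.mul_im, Complex.conj_re, Complex.conj_im,
    Complex.neg_re, Complex.neg_im, Complex.ofReal_re, Complex.ofReal_im, Complex.I_re,
    Complex.I_im]
  ring

end Matrix

theorem Real.quadratic_cos_sin_eq (p q r a : ℝ) :
    Real.cos a ^ 2 * p + Real.cos a * Real.sin a * q + Real.sin a ^ 2 * r
      = (p + r) / 2 + (p - r) / 2 * Real.cos (2 * a) + q / 2 * Real.sin (2 * a) := by
  rw [Real.sin_sq, Real.cos_sq a, Real.sin_two_mul]
  ring

theorem gate_expectation_trigonometric_general {n : ℕ} (P H : Matrix (Fin n) (Fin n) ℂ)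
    (hP2 : P ^ 2 = 1) (ψ : Fin n → ℂ) :
    ∃ c₀ c₁ c₂ : ℝ, ∀ a : ℝ,
      (star ((NormedSpace.exp ((-(Complex.I * (a : ℂ))) • P)).mulVec ψ) ⬝ᵥ
        H.mulVec ((NormedSpace.exp ((-(Complex.I * (a : ℂ))) • P)).mulVec ψ)).re
      = c₀ + c₁ * Real.cos (2 * a) + c₂ * Real.sin (2 * a) := by
  set u := P *ᵥ ψ
  set A := (star ψ ⬝ᵥ H *ᵥ ψ).re
  set B := (star u ⬝ᵥ H *ᵥ u).re
  set C := (star ψ ⬝ᵥ H *ᵥ u).im - (star u ⬝ᵥ H *ᵥ ψ).im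
  refine ⟨(A + B) / 2, (A - B) / 2, C / 2, fun a => ?_⟩
  rw [Matrix.exp_neg_I_mul_smul_of_sq_eq_one hP2, ← Complex.ofReal_cos, ← Complex.ofReal_sin,
    Matrix.add_mulVec, Matrix.smul_mulVec, Matrix.smul_mulVec, Matrix.one_mulVec,
    Matrix.re_star_dotProduct_mulVec_real_smul_add_I_smul]
  exact Real.quadratic_cos_sin_eq A C B a

/-- **Trigonometric structure of single-parameter gate expectations.** Let `P` and `H` be
`n × n` complex matrices with `P` Hermitian, `P² = 1`, and `H` Hermitian, and let
`ψ ∈ ℂⁿ`. Define `f a = Re ⟨exp(-i a P) ψ, H exp(-i a P) ψ⟩`. Then there exist real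
constants `c₀, c₁, c₂` with `f a = c₀ + c₁ cos (2a) + c₂ sin (2a)` for all `a : ℝ`. -/
theorem gate_expectation_trigonometric {n : ℕ} (P H : Matrix (Fin n) (Fin n) ℂ)
    (hP : P.IsHermitian) (hP2 : P ^ 2 = 1) (hH : H.IsHermitian) (ψ : Fin n → ℂ) :
    ∃ c₀ c₁ c₂ : ℝ, ∀ a : ℝ,
      (star ((NormedSpace.exp ((-(Complex.I * (a : ℂ))) • P)).mulVec ψ) ⬝ᵥ
        H.mulVec ((NormedSpace.exp ((-(Complex.I * (a : ℂ))) • P)).mulVec ψ)).re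
      = c₀ + c₁ * Real.cos (2 * a) + c₂ * Real.sin (2 * a) :=
  gate_expectation_trigonometric_general P H hP2 ψ
end

section
/- (Exact two-point parameter-shift rule.) Let P and H be n×n complex matrices with P Hermitian, P² = I, and H Hermitian, and let ψ ∈ ℂⁿ. Define f : ℝ → ℝ by f(a) = Re⟨exp(−i a P)ψ, H exp(−i a P)ψ⟩. Then f is differentiable at every a ∈ ℝ and its derivative is given exactly by the shifted-difference formula f′(a) = f(a + π/4) − f(a − π/4). -/
open scoped Matrix

/-!
Since `P² = 1`, Euler's formula gives `exp(-i a P) = cos a - i sin a P`, so `exp(-i a P) ψ` is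
`cos a • ψ + sin a • w` for a fixed vector `w`. The expectation value of `H` is then a quadratic
form in `(cos a, sin a)`, i.e. `f a = c + p cos 2a + q sin 2a`. For such a sinusoid of frequency
two, shifting the argument by `± π/4` shifts `2a` by `± π/2`, which turns `cos` into `∓ sin` and
`sin` into `± cos`; the difference of the two shifts is exactly `f'`.
-/

theorem exp_mul_I_smul_of_sq_eq_one {𝔸 : Type*} [Ring 𝔸] [Algebra ℂ 𝔸] [TopologicalSpace 𝔸]
    [IsTopologicalRing 𝔸] [ContinuousSMul ℂ 𝔸] [T2Space 𝔸] {P : 𝔸} (hP : P ^ 2 = 1) (z : ℂ) :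
    NormedSpace.exp ((z * Complex.I) • P) =
      Complex.cos z • 1 + (Complex.sin z * Complex.I) • P := by
  rw [NormedSpace.exp_eq_tsum ℂ]
  refine HasSum.tsum_eq (HasSum.even_add_odd ?_ ?_)
  · convert (Complex.hasSum_cos' z).smul_const (1 : 𝔸) using 2 with k
    rw [smul_pow, pow_mul P, hP, one_pow, smul_smul, inv_mul_eq_div]
  · convert ((Complex.hasSum_sin' z).mul_right Complex.I).smul_const P using 2 with k
    rw [smul_pow, pow_succ P, pow_mul P, hP, one_pow, one_mul, smul_smul, inv_mul_eq_div,
      div_mul_cancel₀ _ Complex.I_ne_zero]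

theorem exists_sinusoid_re_star_dotProduct_mulVec {ι : Type*} [Fintype ι] (H : Matrix ι ι ℂ)
    (v w : ι → ℂ) : ∃ c p q : ℝ, ∀ a : ℝ,
      (star ((Real.cos a : ℂ) • v + (Real.sin a : ℂ) • w) ⬝ᵥ
        H *ᵥ ((Real.cos a : ℂ) • v + (Real.sin a : ℂ) • w)).re =
        c + p * Real.cos (2 * a) + q * Real.sin (2 * a) := by
  set A := (star v ⬝ᵥ H *ᵥ v).re
  set B := (star w ⬝ᵥ H *ᵥ w).re
  set C := (star v ⬝ᵥ H *ᵥ w + star w ⬝ᵥ H *ᵥ v).re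
  refine ⟨(A + B) / 2, (A - B) / 2, C / 2, fun a => ?_⟩
  simp only [star_add, star_smul, Complex.star_def, Complex.conj_ofReal, Matrix.mulVec_add,
    Matrix.mulVec_smul, add_dotProduct, dotProduct_add, smul_dotProduct, dotProduct_smul,
    smul_eq_mul, Complex.add_re, Complex.re_ofReal_mul, Real.cos_two_mul, Real.sin_two_mul,
    A, B, C]
  linear_combination (star w ⬝ᵥ H *ᵥ w).re * Real.sin_sq_add_cos_sq a

theorem hasDerivAt_eq_shift_sub_of_sinusoid {f : ℝ → ℝ} {c p q : ℝ}
    (hf : ∀ b, f b = c + p * Real.cos (2 * b) + q * Real.sin (2 * b)) (a : ℝ) :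
    HasDerivAt f (f (a + Real.pi / 4) - f (a - Real.pi / 4)) a := by
  have hlin : HasDerivAt (fun b : ℝ => 2 * b) 2 a := by
    simpa using (hasDerivAt_id' a).const_mul (2 : ℝ)
  have hderiv := ((hlin.cos.const_mul p).const_add c).add (hlin.sin.const_mul q)
  rw [funext hf]
  refine hderiv.congr_deriv ?_
  simp only [mul_add, mul_sub, show 2 * (Real.pi / 4) = Real.pi / 2 by ring,
    Real.cos_add_pi_div_two, Real.cos_sub_pi_div_two, Real.sin_add_pi_div_two,
    Real.sin_sub_pi_div_two]
  ring

theorem parameter_shift_rule_general {n : ℕ} (P H : Matrix (Fin n) (Fin n) ℂ)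
    (hP2 : P ^ 2 = 1) (ψ : Fin n → ℂ)
    (f : ℝ → ℝ)
    (hf : ∀ a : ℝ, f a =
      (star ((NormedSpace.exp ((-(Complex.I * (a : ℂ))) • P)).mulVec ψ) ⬝ᵥ
        H.mulVec ((NormedSpace.exp ((-(Complex.I * (a : ℂ))) • P)).mulVec ψ)).re) :
    ∀ a : ℝ, HasDerivAt f (f (a + Real.pi / 4) - f (a - Real.pi / 4)) a := by
  have hstate : ∀ b : ℝ, NormedSpace.exp ((-(Complex.I * (b : ℂ))) • P) *ᵥ ψ =
      (Real.cos b : ℂ) • ψ + (Real.sin b : ℂ) • (-Complex.I) • P *ᵥ ψ := by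
    intro b
    rw [show -(Complex.I * (b : ℂ)) = (-b : ℂ) * Complex.I by ring,
      exp_mul_I_smul_of_sq_eq_one hP2, Matrix.add_mulVec, Matrix.smul_mulVec, Matrix.one_mulVec,
      Matrix.smul_mulVec, Complex.cos_neg, Complex.sin_neg, smul_smul, Complex.ofReal_cos,
      Complex.ofReal_sin, neg_mul, mul_neg]
  obtain ⟨c, p, q, hsinusoid⟩ :=
    exists_sinusoid_re_star_dotProduct_mulVec H ψ ((-Complex.I) • P *ᵥ ψ)
  exact hasDerivAt_eq_shift_sub_of_sinusoid fun b => by rw [hf, hstate, hsinusoid]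

/-- **Exact two-point parameter-shift rule.** Let `P` and `H` be `n × n` complex matrices
with `P` Hermitian, `P² = 1`, `H` Hermitian, and let `ψ ∈ ℂⁿ`. Define
`f a = Re ⟨exp(-i a P) ψ, H exp(-i a P) ψ⟩`. Then `f` is differentiable at every `a : ℝ`
and `f' a = f (a + π/4) - f (a - π/4)`. -/
theorem parameter_shift_rule {n : ℕ} (P H : Matrix (Fin n) (Fin n) ℂ)
    (hP : P.IsHermitian) (hP2 : P ^ 2 = 1) (hH : H.IsHermitian) (ψ : Fin n → ℂ)
    (f : ℝ → ℝ)
    (hf : ∀ a : ℝ, f a =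
      (star ((NormedSpace.exp ((-(Complex.I * (a : ℂ))) • P)).mulVec ψ) ⬝ᵥ
        H.mulVec ((NormedSpace.exp ((-(Complex.I * (a : ℂ))) • P)).mulVec ψ)).re) :
    ∀ a : ℝ, HasDerivAt f (f (a + Real.pi / 4) - f (a - Real.pi / 4)) a :=
  parameter_shift_rule_general P H hP2 ψ f hf
end

section
/- (Deterministic excursion lemma.) Let (x_t)_{t∈ℕ} be a sequence of nonnegative real numbers and (η_t)_{t∈ℕ} a sequence of nonnegative real numbers such that: (i) there is a constant C > 0 with |x_{t+1} − x_t| ≤ C η_t for all t; (ii) Σ_{t=0}^∞ η_t = ∞; and (iii) Σ_{t=0}^∞ η_t x_t² < ∞. Then x_t → 0 as t → ∞. -/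
/-! Since `∑ η = ∞` but `∑ η x² < ∞`, the sequence is infinitely often below any `δ > 0`.
By (i) and (iii) the series `∑ |x (t+1) - x t| x t²` converges. If `‖x u‖ ≥ ε` for some late `u`,
follow `x` until it first drops below `ε / 2`: along the way `x t² ≥ (ε / 2)²`, so the drop of
at least `ε / 2` costs at least `(ε / 2)³` of that series, contradicting the smallness of its tail. -/

open Filter Topology Finset

section Excursion

variable {E : Type*} [SeminormedAddCommGroup E] {x : ℕ → E} {n : ℕ}

theorem frequently_norm_lt_of_summable_mul_norm_pow {η : ℕ → ℝ} (hη : ∀ t, 0 ≤ η t)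
    (hdiv : ¬Summable η) (hsum : Summable fun t => η t * ‖x t‖ ^ n) {δ : ℝ} (hδ : 0 < δ) :
    ∃ᶠ t in atTop, ‖x t‖ < δ := by
  refine fun hlarge => hdiv ?_
  refine .of_norm_bounded_eventually_nat (hsum.div_const (δ ^ n)) ?_
  filter_upwards [hlarge] with t ht
  rw [not_lt] at ht
  rw [Real.norm_of_nonneg (hη t), le_div_iff₀ (by positivity)]
  exact mul_le_mul_of_nonneg_left (pow_le_pow_left₀ hδ.le ht n) (hη t)

theorem norm_sub_norm_le_sum_Ico_of_le_norm {r : ℝ} (hr : 0 < r) {u v : ℕ} (huv : u ≤ v)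
    (hx : ∀ t ∈ Ico u v, r ≤ ‖x t‖) :
    ‖x u‖ - ‖x v‖ ≤ (∑ t ∈ Ico u v, ‖x (t + 1) - x t‖ * ‖x t‖ ^ n) / r ^ n := by
  rw [le_div_iff₀ (by positivity)]
  calc (‖x u‖ - ‖x v‖) * r ^ n
      ≤ (∑ t ∈ Ico u v, ‖x (t + 1) - x t‖) * r ^ n := by
        gcongr
        calc ‖x u‖ - ‖x v‖ ≤ dist (x u) (x v) := by
              rw [dist_eq_norm]; exact norm_sub_norm_le _ _
          _ ≤ ∑ t ∈ Ico u v, dist (x t) (x (t + 1)) := dist_le_Ico_sum_dist x huv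
          _ = ∑ t ∈ Ico u v, ‖x (t + 1) - x t‖ := by simp only [dist_eq_norm']
    _ = ∑ t ∈ Ico u v, ‖x (t + 1) - x t‖ * r ^ n := sum_mul _ _ _
    _ ≤ ∑ t ∈ Ico u v, ‖x (t + 1) - x t‖ * ‖x t‖ ^ n := by
        gcongr with t ht
        exact hx t ht

theorem exists_ge_and_forall_Ico_not {p : ℕ → Prop} {u w : ℕ} (huw : u ≤ w) (hw : p w) :
    ∃ v, u ≤ v ∧ p v ∧ ∀ t ∈ Ico u v, ¬p t := by
  classical
  have hex : ∃ v, u ≤ v ∧ p v := ⟨w, huw, hw⟩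
  refine ⟨Nat.find hex, (Nat.find_spec hex).1, (Nat.find_spec hex).2, fun t ht hpt => ?_⟩
  rw [mem_Ico] at ht
  exact Nat.find_min hex ht.2 ⟨ht.1, hpt⟩

theorem tendsto_zero_of_frequently_norm_lt_of_summable
    (hsum : Summable fun t => ‖x (t + 1) - x t‖ * ‖x t‖ ^ n)
    (hfreq : ∀ δ > 0, ∃ᶠ t in atTop, ‖x t‖ < δ) : Tendsto x atTop (𝓝 0) := by
  rw [tendsto_zero_iff_norm_tendsto_zero, Metric.tendsto_atTop]
  intro ε hε
  have hε2 : 0 < ε / 2 := half_pos hε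
  obtain ⟨s, hs⟩ := hsum.vanishing (Metric.ball_mem_nhds 0 (mul_pos hε2 (pow_pos hε2 n)))
  obtain ⟨N, hN⟩ := s.exists_nat_subset_range
  refine ⟨N, fun u hu => ?_⟩
  rw [Real.dist_0_eq_abs, abs_norm]
  by_contra! hxu
  obtain ⟨w, hw, hxw⟩ := (hfreq _ hε2).forall_exists_of_atTop u
  obtain ⟨v, huv, hxv, hmid⟩ := exists_ge_and_forall_Ico_not (p := fun t => ‖x t‖ < ε / 2) hw hxw
  have htail : ∑ t ∈ Ico u v, ‖x (t + 1) - x t‖ * ‖x t‖ ^ n < ε / 2 * (ε / 2) ^ n := by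
    have hdisj : Disjoint (Ico u v) s :=
      disjoint_left.2 fun t ht hts => by
        have := mem_range.1 (hN hts); rw [mem_Ico] at ht; omega
    have hsmall := hs _ hdisj
    rw [mem_ball_zero_iff, Real.norm_eq_abs] at hsmall
    exact (le_abs_self _).trans_lt hsmall
  have hexc := norm_sub_norm_le_sum_Ico_of_le_norm (n := n) hε2 huv
    (fun t ht => not_lt.1 (hmid t ht))
  linarith [hexc.trans_lt ((div_lt_iff₀ (pow_pos hε2 n)).2 htail)]

end Excursion

theorem excursion_lemma_general (x η : ℕ → ℝ)
    (hη : ∀ t, 0 ≤ η t)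
    (C : ℝ)
    (hstep : ∀ t, |x (t + 1) - x t| ≤ C * η t)
    (hdiv : Tendsto (fun n => ∑ t ∈ Finset.range n, η t) atTop atTop)
    (hconv : Summable fun t => η t * (x t) ^ 2) :
    Tendsto x atTop (nhds 0) := by
  have hconv' : Summable fun t => η t * ‖x t‖ ^ 2 := by
    simpa only [Real.norm_eq_abs, sq_abs] using hconv
  have hfreq : ∀ δ > 0, ∃ᶠ t in atTop, ‖x t‖ < δ := fun δ hδ =>
    frequently_norm_lt_of_summable_mul_norm_pow hη
      ((not_summable_iff_tendsto_nat_atTop_of_nonneg hη).2 hdiv) hconv' hδ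
  have hvar : Summable fun t => ‖x (t + 1) - x t‖ * ‖x t‖ ^ 2 := by
    refine .of_nonneg_of_le (fun t => by positivity) (fun t => ?_) (hconv'.mul_left C)
    rw [← mul_assoc]
    exact mul_le_mul_of_nonneg_right (hstep t) (by positivity)
  exact tendsto_zero_of_frequently_norm_lt_of_summable hvar hfreq

/-- **Deterministic excursion lemma.** Let `(x t)` be nonnegative reals and `(η t)`
nonnegative step sizes such that (i) `|x (t+1) - x t| ≤ C * η t` for a constant `C > 0`,
(ii) `∑ η t = ∞`, and (iii) `∑ η t * (x t)² < ∞`. Then `x t → 0`. -/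
theorem excursion_lemma (x η : ℕ → ℝ)
    (hx : ∀ t, 0 ≤ x t) (hη : ∀ t, 0 ≤ η t)
    (C : ℝ) (hC : 0 < C)
    (hstep : ∀ t, |x (t + 1) - x t| ≤ C * η t)
    (hdiv : Tendsto (fun n => ∑ t ∈ Finset.range n, η t) atTop atTop)
    (hconv : Summable fun t => η t * (x t) ^ 2) :
    Tendsto x atTop (nhds 0) :=
  excursion_lemma_general x η hη C hstep hdiv hconv
end

section
/- (Almost-sure summability of weighted squared gradients.) Let (Ω, 𝒜, P) be a probability space with a filtration (ℱ_t)_{t∈ℕ}. Let L : ℝ^d → ℝ be continuously differentiable, bounded below, with β-Lipschitz gradient for some β > 0. Let (φ_t) be random vectors in ℝ^d with φ_t ℱ_t-measurable, and (g_t) random vectors with g_t ℱ_{t+1}-measurable, satisfying the recursion φ_{t+1} = φ_t − η_t g_t for deterministic step sizes η_t with 0 < η_t ≤ 1/β and Σ_t η_t² < ∞. Assume, for all t: E[g_t | ℱ_t] = ∇L(φ_t) almost surely; E[‖g_t − ∇L(φ_t)‖² | ℱ_t] ≤ v almost surely for a constant v ≥ 0; and ‖g_t‖ ≤ G almost surely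 for a constant G ≥ 0. Then Σ_{t=0}^∞ η_t ‖∇L(φ_t)‖² < ∞ almost surely. -/
/-
The descent lemma gives `L (φ (t+1)) ≤ L (φ t) - η t ⟪∇L (φ t), g t⟫ + β η t² ‖g t‖²`. On the
`ℱ 0`-event `{‖φ 0‖ ≤ r}` the iterates are bounded by `r + G ∑_{s<t} η s`, so all terms are
integrable there, and the pull-out property with `E[g t | ℱ t] = ∇L (φ t)` turns the expected inner
product into `E ‖∇L (φ t)‖²`. Telescoping against `inf L` makes `∑ η t E ‖∇L (φ t)‖²` finite, hence
`∑ η t ‖∇L (φ t)‖² < ∞` almost surely on the event; finally let `r → ∞`.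
-/

open MeasureTheory Finset InnerProductSpace

theorem norm_le_add_mul_sum_of_eq_sub_smul {E : Type*} [SeminormedAddCommGroup E]
    [NormedSpace ℝ E] {x u : ℕ → E} {η : ℕ → ℝ} {G : ℝ} (hη : ∀ t, 0 ≤ η t)
    (hx : ∀ t, x (t + 1) = x t - η t • u t) (hu : ∀ t, ‖u t‖ ≤ G) (T : ℕ) :
    ‖x T‖ ≤ ‖x 0‖ + G * ∑ t ∈ range T, η t := by
  have hdist : dist (x 0) (x T) ≤ ∑ t ∈ range T, η t * G :=
    dist_le_range_sum_of_dist_le T fun {t} _ => by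
      rw [hx t, dist_eq_norm, sub_sub_cancel, norm_smul, Real.norm_of_nonneg (hη t)]
      exact mul_le_mul_of_nonneg_left (hu t) (hη t)
  rw [← sum_mul, mul_comm] at hdist
  linarith [norm_le_norm_add_norm_sub' (x T) (x 0), dist_eq_norm' (x 0) (x T)]

theorem summable_of_le_sub_add {I b c : ℕ → ℝ} (hb : ∀ t, 0 ≤ b t) (hc0 : ∀ t, 0 ≤ c t)
    (hc : Summable c) (hI : BddBelow (Set.range I)) (h : ∀ t, I (t + 1) ≤ I t - b t + c t) :
    Summable b := by
  obtain ⟨i, hi⟩ := hI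
  have htel : ∀ T, ∑ t ∈ range T, b t ≤ I 0 - I T + ∑ t ∈ range T, c t := by
    intro T
    induction T with
    | zero => simp
    | succ T ih => rw [sum_range_succ, sum_range_succ]; linarith [h T]
  refine summable_of_sum_range_le (c := I 0 - i + ∑' t, c t) hb fun T => ?_
  linarith [htel T, hi ⟨T, rfl⟩, hc.sum_le_tsum (range T) fun t _ => hc0 t]

theorem ae_summable_norm_of_summable_integral_norm {X F ι : Type*} [MeasurableSpace X]
    {μ : Measure X} [NormedAddCommGroup F] [Countable ι] {f : ι → X → F}
    (hf : ∀ i, Integrable (f i) μ) (hsum : Summable fun i => ∫ x, ‖f i x‖ ∂μ) :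
    ∀ᵐ x ∂μ, Summable fun i => ‖f i x‖ := by
  refine summable_norm_of_tsum_eLpNorm_ne_top le_rfl (fun i => (hf i).1) ?_
  simp_rw [eLpNorm_one_eq_lintegral_enorm, ← ofReal_integral_norm_eq_lintegral_enorm (hf _),
    ← ENNReal.ofReal_tsum_of_nonneg (fun i => integral_nonneg fun x => norm_nonneg _) hsum]
  exact ENNReal.ofReal_ne_top

section Gradient

variable {E : Type*} [NormedAddCommGroup E] [InnerProductSpace ℝ E] [CompleteSpace E]
  {L : E → ℝ} {β : ℝ}

theorem abs_sub_sub_inner_le_of_lipschitz_gradient (hL : Differentiable ℝ L)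
    (hLip : ∀ x y, ‖gradient L x - gradient L y‖ ≤ β * ‖x - y‖) (x y : E) :
    |L y - L x - inner ℝ (gradient L x) (y - x)| ≤ β * ‖y - x‖ ^ 2 := by
  have hderiv : ∀ z ∈ segment ℝ x y, HasFDerivWithinAt L (toDual ℝ E (gradient L z))
      (segment ℝ x y) z := fun z _ =>
    (hL z).hasGradientAt.hasFDerivAt.hasFDerivWithinAt
  have hbound : ∀ z ∈ segment ℝ x y,
      ‖toDual ℝ E (gradient L z) - toDual ℝ E (gradient L x)‖ ≤ β * ‖y - x‖ := by
    rintro z ⟨a, b, ha, hb, hab, rfl⟩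
    have hzx : a • x + b • y - x = b • (y - x) := by
      obtain rfl : a = 1 - b := by linarith
      module
    rw [← map_sub, LinearIsometryEquiv.norm_map]
    calc ‖gradient L (a • x + b • y) - gradient L x‖
        ≤ β * ‖a • x + b • y - x‖ := hLip _ _
      _ = b * (β * ‖y - x‖) := by
        rw [hzx, norm_smul, Real.norm_of_nonneg hb]; ring
      _ ≤ β * ‖y - x‖ :=
        mul_le_of_le_one_left ((norm_nonneg _).trans (hLip y x)) (by linarith)
  have := (convex_segment x y).norm_image_sub_le_of_norm_hasFDerivWithin_le' hderiv hbound
    (left_mem_segment ℝ x y) (right_mem_segment ℝ x y)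
  rwa [Real.norm_eq_abs, toDual_apply_apply, mul_assoc, ← sq] at this

theorem le_add_inner_add_of_lipschitz_gradient (hL : Differentiable ℝ L)
    (hLip : ∀ x y, ‖gradient L x - gradient L y‖ ≤ β * ‖x - y‖) (x y : E) :
    L y ≤ L x + inner ℝ (gradient L x) (y - x) + β * ‖y - x‖ ^ 2 := by
  linarith [le_abs_self (L y - L x - inner ℝ (gradient L x) (y - x)),
    abs_sub_sub_inner_le_of_lipschitz_gradient hL hLip x y]

theorem le_sub_mul_inner_add_of_lipschitz_gradient (hL : Differentiable ℝ L)
    (hLip : ∀ x y, ‖gradient L x - gradient L y‖ ≤ β * ‖x - y‖) (x g : E) (η : ℝ) :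
    L (x - η • g) ≤ L x - η * inner ℝ (gradient L x) g + β * η ^ 2 * ‖g‖ ^ 2 := by
  have h := le_add_inner_add_of_lipschitz_gradient hL hLip x (x - η • g)
  rw [sub_sub_cancel_left, inner_neg_right, real_inner_smul_right, norm_neg, norm_smul,
    mul_pow, Real.norm_eq_abs, sq_abs] at h
  linarith

theorem abs_le_of_lipschitz_gradient (hL : Differentiable ℝ L) (hβ : 0 ≤ β)
    (hLip : ∀ x y, ‖gradient L x - gradient L y‖ ≤ β * ‖x - y‖) {x : E} {R : ℝ} (hx : ‖x‖ ≤ R) :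
    |L x| ≤ |L 0| + ‖gradient L 0‖ * R + β * R ^ 2 := by
  have h := abs_sub_sub_inner_le_of_lipschitz_gradient hL hLip 0 x
  rw [sub_zero] at h
  calc |L x| = |L 0 + inner ℝ (gradient L 0) x + (L x - L 0 - inner ℝ (gradient L 0) x)| := by
        ring_nf
    _ ≤ |L 0| + |inner ℝ (gradient L 0) x| + |L x - L 0 - inner ℝ (gradient L 0) x| :=
        abs_add_three _ _ _
    _ ≤ |L 0| + ‖gradient L 0‖ * ‖x‖ + β * ‖x‖ ^ 2 := by
        gcongr; exact abs_real_inner_le_norm _ _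
    _ ≤ _ := by gcongr

theorem norm_gradient_le_of_lipschitz_gradient (hβ : 0 ≤ β)
    (hLip : ∀ x y, ‖gradient L x - gradient L y‖ ≤ β * ‖x - y‖) {x : E} {R : ℝ} (hx : ‖x‖ ≤ R) :
    ‖gradient L x‖ ≤ ‖gradient L 0‖ + β * R :=
  calc ‖gradient L x‖ ≤ ‖gradient L 0‖ + ‖gradient L x - gradient L 0‖ :=
        norm_le_norm_add_norm_sub' _ _
    _ ≤ ‖gradient L 0‖ + β * R := by
        gcongr
        exact (hLip x 0).trans (by rw [sub_zero]; gcongr)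

theorem continuous_gradient_of_lipschitz_gradient
    (hLip : ∀ x y, ‖gradient L x - gradient L y‖ ≤ β * ‖x - y‖) : Continuous (gradient L) :=
  (LipschitzWith.of_dist_le' (by simpa only [dist_eq_norm] using hLip)).continuous

end Gradient

section StochasticGradient

variable {E : Type*} [NormedAddCommGroup E] [InnerProductSpace ℝ E] [CompleteSpace E]
  {L : E → ℝ} {β : ℝ} {Ω : Type*} {m m0 : MeasurableSpace Ω} {μ : Measure Ω}

theorem integral_inner_eq_integral_norm_sq_of_condExp_ae_eq (hm : m ≤ m0)
    [SigmaFinite (μ.trim hm)] {a g : Ω → E} (ha : StronglyMeasurable[m] a)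
    (hg : Integrable g μ) (hag : Integrable (fun ω => inner ℝ (a ω) (g ω)) μ)
    (hcond : μ[g | m] =ᵐ[μ] a) :
    ∫ ω, inner ℝ (a ω) (g ω) ∂μ = ∫ ω, ‖a ω‖ ^ 2 ∂μ := by
  have hpull : μ[fun ω => inner ℝ (a ω) (g ω) | m] =ᵐ[μ] fun ω => inner ℝ (a ω) (μ[g | m] ω) :=
    condExp_bilin_of_stronglyMeasurable_left (innerSL ℝ) ha hag hg
  calc ∫ ω, inner ℝ (a ω) (g ω) ∂μ = ∫ ω, (μ[fun ω => inner ℝ (a ω) (g ω) | m]) ω ∂μ :=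
        (integral_condExp hm).symm
    _ = ∫ ω, ‖a ω‖ ^ 2 ∂μ := by
        refine integral_congr_ae ?_
        filter_upwards [hpull, hcond] with ω h1 h2
        rw [h1, h2, real_inner_self_eq_norm_sq]

variable [IsFiniteMeasure μ]

theorem integrable_comp_of_lipschitz_gradient (hL : Differentiable ℝ L) (hβ : 0 ≤ β)
    (hLip : ∀ x y, ‖gradient L x - gradient L y‖ ≤ β * ‖x - y‖) {x : Ω → E}
    (hx : StronglyMeasurable x) {R : ℝ} (hxR : ∀ᵐ ω ∂μ, ‖x ω‖ ≤ R) :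
    Integrable (fun ω => L (x ω)) μ := by
  refine .of_bound (hL.continuous.comp_stronglyMeasurable hx).aestronglyMeasurable
    (|L 0| + ‖gradient L 0‖ * R + β * R ^ 2) ?_
  filter_upwards [hxR] with ω h
  exact abs_le_of_lipschitz_gradient hL hβ hLip h

theorem integrable_norm_sq_gradient_comp (hβ : 0 ≤ β)
    (hLip : ∀ x y, ‖gradient L x - gradient L y‖ ≤ β * ‖x - y‖) {x : Ω → E}
    (hx : StronglyMeasurable x) {R : ℝ} (hxR : ∀ᵐ ω ∂μ, ‖x ω‖ ≤ R) :
    Integrable (fun ω => ‖gradient L (x ω)‖ ^ 2) μ := by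
  refine .of_bound
    (((continuous_gradient_of_lipschitz_gradient hLip).comp_stronglyMeasurable hx).norm.pow
      2).aestronglyMeasurable ((‖gradient L 0‖ + β * R) ^ 2) ?_
  filter_upwards [hxR] with ω h
  rw [norm_pow, norm_norm]
  gcongr
  exact norm_gradient_le_of_lipschitz_gradient hβ hLip h

theorem integral_comp_sub_smul_le (hm : m ≤ m0) (hL : Differentiable ℝ L) (hβ : 0 ≤ β)
    (hLip : ∀ x y, ‖gradient L x - gradient L y‖ ≤ β * ‖x - y‖) {x g : Ω → E} {η R G : ℝ}
    (hx : StronglyMeasurable[m] x) (hg : StronglyMeasurable g) (hxR : ∀ᵐ ω ∂μ, ‖x ω‖ ≤ R)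
    (hgG : ∀ᵐ ω ∂μ, ‖g ω‖ ≤ G) (hcond : μ[g | m] =ᵐ[μ] fun ω => gradient L (x ω)) :
    ∫ ω, L (x ω - η • g ω) ∂μ ≤ ∫ ω, L (x ω) ∂μ - η * ∫ ω, ‖gradient L (x ω)‖ ^ 2 ∂μ
      + β * η ^ 2 * (G ^ 2 * μ.real Set.univ) := by
  have ha : StronglyMeasurable[m] fun ω => gradient L (x ω) :=
    (continuous_gradient_of_lipschitz_gradient hLip).comp_stronglyMeasurable hx
  have hgrad : ∀ᵐ ω ∂μ, ‖gradient L (x ω)‖ ≤ ‖gradient L 0‖ + β * R := by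
    filter_upwards [hxR] with ω h using norm_gradient_le_of_lipschitz_gradient hβ hLip h
  have hgi : Integrable g μ := .of_bound hg.aestronglyMeasurable G hgG
  have hinner : Integrable (fun ω => inner ℝ (gradient L (x ω)) (g ω)) μ := by
    refine .of_bound ((ha.mono hm).inner hg).aestronglyMeasurable
      ((‖gradient L 0‖ + β * R) * G) ?_
    filter_upwards [hgrad, hgG] with ω h1 h2
    exact (norm_inner_le_norm _ _).trans
      (mul_le_mul h1 h2 (norm_nonneg _) ((norm_nonneg _).trans h1))
  have hg2G : ∀ᵐ ω ∂μ, ‖‖g ω‖ ^ 2‖ ≤ G ^ 2 := by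
    filter_upwards [hgG] with ω h
    rw [norm_pow, norm_norm]
    gcongr
  have hg2 : Integrable (fun ω => ‖g ω‖ ^ 2) μ :=
    .of_bound (hg.norm.pow 2).aestronglyMeasurable (G ^ 2) hg2G
  have hLx := integrable_comp_of_lipschitz_gradient hL hβ hLip (hx.mono hm) hxR
  have hLy : Integrable (fun ω => L (x ω - η • g ω)) μ := by
    refine integrable_comp_of_lipschitz_gradient hL hβ hLip ((hx.mono hm).sub (hg.const_smul η))
      (R := R + |η| * G) ?_
    filter_upwards [hxR, hgG] with ω h1 h2
    refine (norm_sub_le _ _).trans ?_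
    rw [norm_smul, Real.norm_eq_abs]
    gcongr
  have hdrift : Integrable (fun ω => L (x ω) - η * inner ℝ (gradient L (x ω)) (g ω)) μ :=
    hLx.sub (hinner.const_mul η)
  calc ∫ ω, L (x ω - η • g ω) ∂μ
      ≤ ∫ ω, (L (x ω) - η * inner ℝ (gradient L (x ω)) (g ω) + β * η ^ 2 * ‖g ω‖ ^ 2) ∂μ :=
        integral_mono hLy (hdrift.add (hg2.const_mul _)) fun ω =>
          le_sub_mul_inner_add_of_lipschitz_gradient hL hLip (x ω) (g ω) η
    _ = ∫ ω, L (x ω) ∂μ - η * ∫ ω, ‖gradient L (x ω)‖ ^ 2 ∂μ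
          + β * η ^ 2 * ∫ ω, ‖g ω‖ ^ 2 ∂μ := by
        rw [integral_add hdrift (hg2.const_mul _),
          integral_sub hLx (hinner.const_mul η), integral_const_mul, integral_const_mul,
          integral_inner_eq_integral_norm_sq_of_condExp_ae_eq hm ha hgi hinner hcond]
    _ ≤ _ := by
        gcongr
        exact (le_abs_self _).trans (norm_integral_le_of_norm_le_const hg2G)

variable {φ g : ℕ → Ω → E} {η : ℕ → ℝ} {G : ℝ}

theorem summable_mul_integral_norm_sq_gradient_of_sgd (ℱ : Filtration ℕ m0)
    (hL : Differentiable ℝ L) (hLbdd : BddBelow (Set.range L)) (hβ : 0 ≤ β)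
    (hLip : ∀ x y, ‖gradient L x - gradient L y‖ ≤ β * ‖x - y‖)
    (hφ : ∀ t, StronglyMeasurable[ℱ t] (φ t)) (hg : ∀ t, StronglyMeasurable (g t))
    (hη : ∀ t, 0 ≤ η t) (hη2 : Summable fun t => η t ^ 2)
    (hrec : ∀ t ω, φ (t + 1) ω = φ t ω - η t • g t ω)
    (hunb : ∀ t, μ[g t | ℱ t] =ᵐ[μ] fun ω => gradient L (φ t ω)) {R : ℕ → ℝ}
    (hφR : ∀ t, ∀ᵐ ω ∂μ, ‖φ t ω‖ ≤ R t) (hgG : ∀ t, ∀ᵐ ω ∂μ, ‖g t ω‖ ≤ G) :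
    Summable fun t => η t * ∫ ω, ‖gradient L (φ t ω)‖ ^ 2 ∂μ := by
  obtain ⟨c, hc⟩ := hLbdd
  refine summable_of_le_sub_add (I := fun t => ∫ ω, L (φ t ω) ∂μ)
    (c := fun t => β * η t ^ 2 * (G ^ 2 * μ.real Set.univ))
    (fun t => mul_nonneg (hη t) (integral_nonneg fun _ => by positivity))
    (fun t => by positivity) (hη2.mul_left β |>.mul_right _) ⟨μ.real Set.univ * c, ?_⟩
    fun t => ?_
  · rintro _ ⟨t, rfl⟩
    rw [← smul_eq_mul, ← integral_const]
    exact integral_mono (integrable_const c)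
      (integrable_comp_of_lipschitz_gradient hL hβ hLip ((hφ t).mono (ℱ.le t)) (hφR t))
      fun ω => hc ⟨φ t ω, rfl⟩
  · simp only [hrec t]
    exact integral_comp_sub_smul_le (ℱ.le t) hL hβ hLip (hφ t) (hg t) (hφR t) (hgG t) (hunb t)

theorem ae_summable_mul_norm_sq_gradient_of_sgd (ℱ : Filtration ℕ m0)
    (hL : Differentiable ℝ L) (hLbdd : BddBelow (Set.range L)) (hβ : 0 ≤ β)
    (hLip : ∀ x y, ‖gradient L x - gradient L y‖ ≤ β * ‖x - y‖)
    (hφ : ∀ t, StronglyMeasurable[ℱ t] (φ t)) (hg : ∀ t, StronglyMeasurable (g t))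
    (hη : ∀ t, 0 ≤ η t) (hη2 : Summable fun t => η t ^ 2)
    (hrec : ∀ t ω, φ (t + 1) ω = φ t ω - η t • g t ω)
    (hunb : ∀ t, μ[g t | ℱ t] =ᵐ[μ] fun ω => gradient L (φ t ω)) {R : ℕ → ℝ}
    (hφR : ∀ t, ∀ᵐ ω ∂μ, ‖φ t ω‖ ≤ R t) (hgG : ∀ t, ∀ᵐ ω ∂μ, ‖g t ω‖ ≤ G) :
    ∀ᵐ ω ∂μ, Summable fun t => η t * ‖gradient L (φ t ω)‖ ^ 2 := by
  have hnorm : ∀ t ω, ‖η t * ‖gradient L (φ t ω)‖ ^ 2‖ = η t * ‖gradient L (φ t ω)‖ ^ 2 :=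
    fun t ω => Real.norm_of_nonneg (by have := hη t; positivity)
  have hint : ∀ t, Integrable (fun ω => η t * ‖gradient L (φ t ω)‖ ^ 2) μ := fun t =>
    (integrable_norm_sq_gradient_comp hβ hLip ((hφ t).mono (ℱ.le t)) (hφR t)).const_mul _
  have hsum := summable_mul_integral_norm_sq_gradient_of_sgd ℱ hL hLbdd hβ hLip hφ hg hη hη2
    hrec hunb hφR hgG
  filter_upwards [ae_summable_norm_of_summable_integral_norm hint
    (by simpa only [hnorm, integral_const_mul] using hsum)] with ω hω
  simpa only [hnorm] using hω

theorem ae_summable_mul_norm_sq_gradient_of_norm_le (ℱ : Filtration ℕ m0)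
    (hL : Differentiable ℝ L) (hLbdd : BddBelow (Set.range L)) (hβ : 0 ≤ β)
    (hLip : ∀ x y, ‖gradient L x - gradient L y‖ ≤ β * ‖x - y‖)
    (hφ : ∀ t, StronglyMeasurable[ℱ t] (φ t)) (hg : ∀ t, StronglyMeasurable (g t))
    (hη : ∀ t, 0 ≤ η t) (hη2 : Summable fun t => η t ^ 2)
    (hrec : ∀ t ω, φ (t + 1) ω = φ t ω - η t • g t ω)
    (hunb : ∀ t, μ[g t | ℱ t] =ᵐ[μ] fun ω => gradient L (φ t ω))
    (hgG : ∀ t, ∀ᵐ ω ∂μ, ‖g t ω‖ ≤ G) (r : ℝ) :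
    ∀ᵐ ω ∂μ, ‖φ 0 ω‖ ≤ r → Summable fun t => η t * ‖gradient L (φ t ω)‖ ^ 2 := by
  set s := {ω | ‖φ 0 ω‖ ≤ r}
  have hs : MeasurableSet[ℱ 0] s := measurableSet_le (hφ 0).norm.measurable measurable_const
  change ∀ᵐ ω ∂μ, ω ∈ s → _
  rw [← ae_restrict_iff' (ℱ.le 0 s hs)]
  have hgG' : ∀ t, ∀ᵐ ω ∂μ.restrict s, ‖g t ω‖ ≤ G := fun t => ae_restrict_of_ae (hgG t)
  refine ae_summable_mul_norm_sq_gradient_of_sgd ℱ hL hLbdd hβ hLip hφ hg hη hη2 hrec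
    (fun t => ?_) (R := fun t => r + G * ∑ s ∈ range t, η s) (fun t => ?_) hgG'
  · exact (condExp_restrict_ae_eq_restrict (ℱ.le t) (ℱ.mono (Nat.zero_le t) s hs)
      (.of_bound (hg t).aestronglyMeasurable G (hgG t))).trans (ae_restrict_of_ae (hunb t))
  · filter_upwards [ae_restrict_mem (ℱ.le 0 s hs), ae_all_iff.2 hgG'] with ω h0 hgω
    exact (norm_le_add_mul_sum_of_eq_sub_smul (x := (φ · ω)) hη (hrec · ω) hgω t).trans
      (add_le_add_left (show ‖φ 0 ω‖ ≤ r from h0) _)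

end StochasticGradient

theorem summable_weighted_squared_gradients_general {d : ℕ}
    {Ω : Type*} {𝒜 : MeasurableSpace Ω} (μ : Measure Ω) [IsProbabilityMeasure μ]
    (ℱ : Filtration ℕ 𝒜)
    (L : EuclideanSpace ℝ (Fin d) → ℝ) (hLdiff : ContDiff ℝ 1 L)
    (hLbdd : BddBelow (Set.range L))
    (β : ℝ) (hβ : 0 < β)
    (hLip : ∀ x y, ‖gradient L x - gradient L y‖ ≤ β * ‖x - y‖)
    (φ g : ℕ → Ω → EuclideanSpace ℝ (Fin d))
    (hφmeas : ∀ t, Measurable[ℱ t] (φ t))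
    (hgmeas : ∀ t, Measurable[ℱ (t + 1)] (g t))
    (η : ℕ → ℝ) (hη0 : ∀ t, 0 < η t)
    (hη2 : Summable fun t => (η t) ^ 2)
    (hrec : ∀ t ω, φ (t + 1) ω = φ t ω - η t • g t ω)
    (hunb : ∀ t, μ[g t | ℱ t] =ᵐ[μ] fun ω => gradient L (φ t ω))
    (G : ℝ) (hGbd : ∀ t, ∀ᵐ ω ∂μ, ‖g t ω‖ ≤ G) :
    ∀ᵐ ω ∂μ, Summable fun t => η t * ‖gradient L (φ t ω)‖ ^ 2 := by
  have hlocal : ∀ n : ℕ, ∀ᵐ ω ∂μ, ‖φ 0 ω‖ ≤ n →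
      Summable fun t => η t * ‖gradient L (φ t ω)‖ ^ 2 := fun n =>
    ae_summable_mul_norm_sq_gradient_of_norm_le ℱ (hLdiff.differentiable one_ne_zero) hLbdd
      hβ.le hLip (fun t => (hφmeas t).stronglyMeasurable)
      (fun t => ((hgmeas t).mono (ℱ.le _) le_rfl).stronglyMeasurable) (fun t => (hη0 t).le)
      hη2 hrec hunb hGbd n
  filter_upwards [ae_all_iff.2 hlocal] with ω hω
  exact hω _ (Nat.le_ceil _)

/-- **Almost-sure summability of weighted squared gradients.** For the stochastic
gradient recursion `φ (t+1) = φ t - η t • g t` with `L` continuously differentiable,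
bounded below, with `β`-Lipschitz gradient, step sizes `0 < η t ≤ 1/β` with
`∑ (η t)² < ∞`, conditionally unbiased estimators `E[g t | ℱ t] = ∇L(φ t)` with
conditional variance bound `v` and a.s. norm bound `G`, we have
`∑ t, η t * ‖∇L(φ t)‖² < ∞` almost surely. -/
theorem summable_weighted_squared_gradients {d : ℕ}
    {Ω : Type*} {𝒜 : MeasurableSpace Ω} (μ : Measure Ω) [IsProbabilityMeasure μ]
    (ℱ : Filtration ℕ 𝒜)
    (L : EuclideanSpace ℝ (Fin d) → ℝ) (hLdiff : ContDiff ℝ 1 L)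
    (hLbdd : BddBelow (Set.range L))
    (β : ℝ) (hβ : 0 < β)
    (hLip : ∀ x y, ‖gradient L x - gradient L y‖ ≤ β * ‖x - y‖)
    (φ g : ℕ → Ω → EuclideanSpace ℝ (Fin d))
    (hφmeas : ∀ t, Measurable[ℱ t] (φ t))
    (hgmeas : ∀ t, Measurable[ℱ (t + 1)] (g t))
    (η : ℕ → ℝ) (hη0 : ∀ t, 0 < η t) (hηβ : ∀ t, η t ≤ 1 / β)
    (hη2 : Summable fun t => (η t) ^ 2)
    (hrec : ∀ t ω, φ (t + 1) ω = φ t ω - η t • g t ω)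
    (v : ℝ) (hv : 0 ≤ v)
    (hunb : ∀ t, μ[g t | ℱ t] =ᵐ[μ] fun ω => gradient L (φ t ω))
    (hvar : ∀ t, ∀ᵐ ω ∂μ,
      (μ[fun ω' => ‖g t ω' - gradient L (φ t ω')‖ ^ 2 | ℱ t]) ω ≤ v)
    (G : ℝ) (hG : 0 ≤ G) (hGbd : ∀ t, ∀ᵐ ω ∂μ, ‖g t ω‖ ≤ G) :
    ∀ᵐ ω ∂μ, Summable fun t => η t * ‖gradient L (φ t ω)‖ ^ 2 :=
  summable_weighted_squared_gradients_general μ ℱ L hLdiff hLbdd β hβ hLip φ g hφmeas hgmeas η hη0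
    hη2 hrec hunb G hGbd
end

section
/- (Convergence to stationarity, almost-sure form.) Let (Ω, 𝒜, P) be a probability space with a filtration (ℱ_t)_{t∈ℕ}. Let L : ℝ^d → ℝ be continuously differentiable, bounded below, with β-Lipschitz gradient for some β > 0. Let (φ_t) be random vectors in ℝ^d with φ_t ℱ_t-measurable, and (g_t) random vectors with g_t ℱ_{t+1}-measurable, satisfying the recursion φ_{t+1} = φ_t − η_t g_t for deterministic step sizes η_t with 0 < η_t ≤ 1/β, η_t → 0, Σ_t η_t = ∞, and Σ_t η_t² < ∞. Assume, for all t: E[g_t | ℱ_t] = ∇L(φ_t) almost surely; E[‖g_t − ∇L(φ_t)‖² | ℱ_t] ≤ v almost surely for a constant v ≥ 0; and ‖g_t‖ ≤ G almost surely for a constant G ≥ 0. Then P( lim_{t→∞} ‖∇L(φ_t)‖ = 0 ) = 1. -/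
open MeasureTheory Filter

open scoped Topology InnerProductSpace NNReal

/-!
The descent inequality `L(φₜ₊₁) ≤ L(φₜ) - ηₜ⟪∇L(φₜ), gₜ⟫ + β ηₜ² ‖gₜ‖²`, integrated using
unbiasedness, gives `E L(φₜ₊₁) + ηₜ E‖∇L(φₜ)‖² ≤ E L(φₜ) + β G² ηₜ²`. As `L` is bounded below
and `∑ ηₜ² < ∞`, this telescopes to `∑ ηₜ E‖∇L(φₜ)‖² < ∞`, so `∑ ηₜ ‖∇L(φₜ)‖² < ∞` almost
surely. For `L(φₜ)` to be integrable we work on the `ℱ₀`-measurable events `‖φ₀‖ ≤ N`, on which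
every `φₜ` is bounded and which preserve unbiasedness.

Along such a path `aₜ = ‖∇L(φₜ)‖` moves by at most `β G ηₜ` per step. Since `∑ ηₜ = ∞` it is
frequently below any `c > 0`, while every climb from `c` to `2c` made once `ηₜ` is small uses up
an amount of order `c³ / (β G)` of the convergent series `∑ ηₜ aₜ²`, so `aₜ → 0`.
-/

section Deterministic

open Finset

theorem sum_Ico_le_tsum_nat_add {f : ℕ → ℝ} (hf : Summable f) (hf0 : ∀ n, 0 ≤ f n) (N n : ℕ) :
    ∑ k ∈ Ico N n, f k ≤ ∑' k, f (k + N) := by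
  rw [sum_Ico_eq_sum_range]
  simp_rw [add_comm N]
  exact Summable.sum_le_tsum _ (fun k _ => hf0 _) ((summable_nat_add_iff N).2 hf)

theorem frequently_le_of_summable_mul_sq {a η : ℕ → ℝ} (hη : ∀ t, 0 ≤ η t) (hη_not : ¬ Summable η)
    (hsum : Summable fun t => η t * a t ^ 2) {c : ℝ} (hc : 0 < c) :
    ∃ᶠ t in atTop, a t ≤ c := by
  refine fun hbig => hη_not <| (hsum.mul_left (c ^ 2)⁻¹).of_norm_bounded_eventually_nat ?_
  filter_upwards [hbig] with t ht
  rw [not_le] at ht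
  rw [Real.norm_of_nonneg (hη t), le_inv_mul_iff₀ (by positivity), mul_comm]
  exact mul_le_mul_of_nonneg_left (pow_le_pow_left₀ hc.le ht.le 2) (hη t)

theorem exists_last_le_before {a : ℕ → ℝ} {c : ℝ} {s u : ℕ} (hsu : s ≤ u) (hs : a s ≤ c)
    (hu : c < a u) : ∃ m, s ≤ m ∧ m < u ∧ a m ≤ c ∧ ∀ t, m < t → t ≤ u → c < a t := by
  classical
  have hspec : a (Nat.findGreatest (fun t => a t ≤ c) u) ≤ c :=
    Nat.findGreatest_spec (P := fun t => a t ≤ c) hsu hs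
  refine ⟨_, Nat.le_findGreatest hsu hs, (Nat.findGreatest_le u).lt_of_ne fun h => ?_, hspec,
    fun t ht htu => not_le.1 (Nat.findGreatest_is_greatest ht htu)⟩
  exact hspec.not_gt (h.symm ▸ hu)

theorem cube_le_of_crossing {a η : ℕ → ℝ} {K c : ℝ} (hK : 0 ≤ K) (hc : 0 ≤ c)
    (hstep : ∀ t, |a (t + 1) - a t| ≤ K * η t) {m u : ℕ} (hmu : m < u) (hm : a m ≤ c)
    (hbetween : ∀ t, m < t → t < u → c < a t) (hu : 2 * c ≤ a u) (hηm : 2 * K * η m ≤ c)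
    (hη : ∀ t, 0 ≤ η t) :
    c ^ 3 ≤ 2 * K * ∑ t ∈ Ico (m + 1) u, η t * a t ^ 2 := by
  have hrise : c ≤ K * ∑ t ∈ Ico m u, η t := by
    calc c ≤ a u - a m := by linarith
      _ = ∑ t ∈ Ico m u, (a (t + 1) - a t) := (sum_Ico_sub a hmu.le).symm
      _ ≤ ∑ t ∈ Ico m u, K * η t := sum_le_sum fun t _ => (le_abs_self _).trans (hstep t)
      _ = K * ∑ t ∈ Ico m u, η t := (mul_sum _ _ _).symm
  have hlong : c ≤ 2 * K * ∑ t ∈ Ico (m + 1) u, η t := by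
    rw [sum_eq_sum_Ico_succ_bot hmu] at hrise
    linarith
  calc c ^ 3 = c ^ 2 * c := by ring
    _ ≤ c ^ 2 * (2 * K * ∑ t ∈ Ico (m + 1) u, η t) := by gcongr
    _ = 2 * K * ∑ t ∈ Ico (m + 1) u, η t * c ^ 2 := by rw [← sum_mul]; ring
    _ ≤ 2 * K * ∑ t ∈ Ico (m + 1) u, η t * a t ^ 2 := by
        gcongr 2 * K * ∑ t ∈ _, η t * ?_ with t ht
        · exact hη t
        · rw [mem_Ico] at ht
          exact pow_le_pow_left₀ hc (hbetween t ht.1 ht.2).le 2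

theorem tendsto_zero_of_summable_mul_sq {a η : ℕ → ℝ} {K : ℝ}
    (ha : ∀ t, 0 ≤ a t) (hstep : ∀ t, |a (t + 1) - a t| ≤ K * η t)
    (hη : ∀ t, 0 ≤ η t) (hηlim : Tendsto η atTop (𝓝 0))
    (hηdiv : Tendsto (fun n => ∑ t ∈ range n, η t) atTop atTop)
    (hsum : Summable fun t => η t * a t ^ 2) : Tendsto a atTop (𝓝 0) := by
  obtain ⟨K, hK, hstep⟩ : ∃ K' > 0, ∀ t, |a (t + 1) - a t| ≤ K' * η t :=
    ⟨|K| + 1, by positivity, fun t => (hstep t).trans <| by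
      gcongr
      exacts [hη t, by linarith [le_abs_self K]]⟩
  refine tendsto_order.2 ⟨fun b hb => .of_forall fun t => hb.trans_le (ha t), fun b hb => ?_⟩
  obtain ⟨c, hc, rfl⟩ : ∃ c, 0 < c ∧ b = 2 * c := ⟨b / 2, by positivity, by ring⟩
  by_contra hlarge
  simp only [not_eventually, not_lt] at hlarge
  have hsmall : ∃ᶠ t in atTop, a t ≤ c := frequently_le_of_summable_mul_sq hη
    ((not_summable_iff_tendsto_nat_atTop_of_nonneg hη).2 hηdiv) hsum hc
  have hηsmall : ∀ᶠ t in atTop, 2 * K * η t ≤ c := by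
    refine (hηlim.const_mul (2 * K)).eventually (ge_mem_nhds ?_)
    simpa using hc
  have htail : ∀ᶠ N in atTop, ∑' k, η (k + N) * a (k + N) ^ 2 < c ^ 3 / (2 * K) :=
    (tendsto_sum_nat_add fun t => η t * a t ^ 2).eventually (gt_mem_nhds (by positivity))
  obtain ⟨T, hT⟩ := (hηsmall.and htail).exists_forall_of_atTop
  obtain ⟨s, hTs, hs⟩ := frequently_atTop.1 hsmall T
  obtain ⟨u, hsu, hu⟩ := frequently_atTop.1 hlarge s
  obtain ⟨m, hsm, hmu, hm, hbetween⟩ := exists_last_le_before hsu hs (by linarith)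
  have hcross := cube_le_of_crossing hK.le hc.le hstep hmu hm
    (fun t h1 h2 => hbetween t h1 h2.le) (by linarith) (hT m (by omega)).1 hη
  have hle := sum_Ico_le_tsum_nat_add hsum (fun t => mul_nonneg (hη t) (sq_nonneg _)) (m + 1) u
  have hlt := (hT (m + 1) (by omega)).2
  rw [lt_div_iff₀ (by positivity)] at hlt
  have := mul_le_mul_of_nonneg_left hle (by positivity : (0 : ℝ) ≤ 2 * K)
  linarith

theorem summable_of_add_le_add {I J c : ℕ → ℝ} (hI : BddBelow (Set.range I))
    (hJ : ∀ t, 0 ≤ J t) (hc : Summable c) (hc0 : ∀ t, 0 ≤ c t)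
    (hstep : ∀ t, I (t + 1) + J t ≤ I t + c t) :
    Summable J := by
  obtain ⟨b, hb⟩ := hI
  refine summable_of_sum_range_le (c := I 0 - b + ∑' t, c t) hJ fun n => ?_
  calc ∑ t ∈ range n, J t ≤ ∑ t ∈ range n, (I t - I (t + 1) + c t) :=
        sum_le_sum fun t _ => by linarith [hstep t]
    _ = I 0 - I n + ∑ t ∈ range n, c t := by rw [sum_add_distrib, sum_range_sub']
    _ ≤ I 0 - b + ∑' t, c t := by
        gcongr
        · exact hb (Set.mem_range_self n)
        · exact hc.sum_le_tsum _ fun t _ => hc0 t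

end Deterministic

theorem le_add_inner_gradient_add_mul_norm_sq {E : Type*} [NormedAddCommGroup E]
    [InnerProductSpace ℝ E] [CompleteSpace E] {L : E → ℝ}
    (hL : Differentiable ℝ L) {K : ℝ≥0} (hLip : LipschitzWith K (gradient L)) (x y : E) :
    L y ≤ L x + ⟪gradient L x, y - x⟫_ℝ + K * ‖y - x‖ ^ 2 := by
  have hbound : ∀ z ∈ segment ℝ x y, ‖fderiv ℝ L z - fderiv ℝ L x‖ ≤ K * ‖y - x‖ := by
    intro z hz
    rw [← toDual_gradient, ← toDual_gradient, ← map_sub, LinearIsometryEquiv.norm_map,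
      ← dist_eq_norm]
    exact (hLip.dist_le_mul z x).trans (by
      rw [dist_eq_norm]; gcongr; exact norm_sub_le_of_mem_segment hz)
  have h := (convex_segment x y).norm_image_sub_le_of_norm_fderiv_le' (fun z _ => hL z) hbound
    (left_mem_segment ℝ x y) (right_mem_segment ℝ x y)
  rw [← toDual_gradient, InnerProductSpace.toDual_apply_apply] at h
  have := (abs_le.1 (Real.norm_eq_abs _ ▸ h)).2
  nlinarith

section Probability

open Set

variable {E : Type*} [NormedAddCommGroup E] [InnerProductSpace ℝ E]
variable {Ω : Type*} {m m0 : MeasurableSpace Ω} {μ : Measure Ω}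

theorem integral_inner_condExp [CompleteSpace E] (hm : m ≤ m0) [SigmaFinite (μ.trim hm)]
    {X Y : Ω → E} (hX : StronglyMeasurable[m] X)
    (hXY : Integrable (fun ω => ⟪X ω, Y ω⟫_ℝ) μ) (hY : Integrable Y μ) :
    ∫ ω, ⟪X ω, Y ω⟫_ℝ ∂μ = ∫ ω, ⟪X ω, (μ[Y | m]) ω⟫_ℝ ∂μ := by
  rw [← integral_condExp hm]
  exact integral_congr_ae (condExp_bilin_of_stronglyMeasurable_left (innerSL ℝ) hX hXY hY)

theorem integrable_comp_of_ae_norm_le [IsFiniteMeasure μ] {X G : Type*}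
    [SeminormedAddCommGroup X] [ProperSpace X] [NormedAddCommGroup G] {F : X → G}
    (hF : Continuous F) {Z : Ω → X} (hZ : AEStronglyMeasurable Z μ) {R : ℝ}
    (hZR : ∀ᵐ ω ∂μ, ‖Z ω‖ ≤ R) : Integrable (fun ω => F (Z ω)) μ := by
  obtain ⟨C, hC⟩ := (isCompact_closedBall (0 : X) R).exists_bound_of_continuousOn hF.continuousOn
  refine .of_bound (hF.comp_aestronglyMeasurable hZ) C ?_
  filter_upwards [hZR] with ω hω using hC _ (mem_closedBall_zero_iff.2 hω)

theorem ae_of_forall_ae_restrict_norm_le {F : Type*} [Norm F] {X : Ω → F} {P : Ω → Prop}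
    (h : ∀ N : ℕ, ∀ᵐ ω ∂μ.restrict {ω | ‖X ω‖ ≤ N}, P ω) : ∀ᵐ ω ∂μ, P ω := by
  have hcover : ⋃ N : ℕ, {ω | ‖X ω‖ ≤ N} = univ :=
    eq_univ_of_forall fun ω => mem_iUnion.2 (exists_nat_ge ‖X ω‖)
  rwa [← Measure.restrict_univ (μ := μ), ← hcover, ae_restrict_iUnion_iff]

theorem ae_summable_of_summable_integral {f : ℕ → Ω → ℝ} (hf0 : ∀ n, 0 ≤ᵐ[μ] f n)
    (hf : ∀ n, Integrable (f n) μ) (hsum : Summable fun n => ∫ ω, f n ω ∂μ) :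
    ∀ᵐ ω ∂μ, Summable fun n => f n ω := by
  have heLp : ∀ n, eLpNorm (f n) 1 μ = ENNReal.ofReal (∫ ω, f n ω ∂μ) := by
    intro n
    rw [eLpNorm_one_eq_lintegral_enorm, ofReal_integral_eq_lintegral_ofReal (hf n) (hf0 n)]
    refine lintegral_congr_ae ?_
    filter_upwards [hf0 n] with ω hω using Real.enorm_of_nonneg hω
  have hne : ∑' n, eLpNorm (f n) 1 μ ≠ ⊤ := by
    simpa only [heLp] using hsum.tsum_ofReal_ne_top
  filter_upwards [summable_norm_of_tsum_eLpNorm_ne_top le_rfl (fun n => (hf n).1) hne]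
    with ω hω using hω.of_norm


variable [ProperSpace E]

theorem integral_sgd_step_le [IsFiniteMeasure μ] (hm : m ≤ m0) {L : E → ℝ}
    (hL : Differentiable ℝ L) {K : ℝ≥0} (hLip : LipschitzWith K (gradient L)) {x y : Ω → E}
    (hx : StronglyMeasurable[m] x) (hy : AEStronglyMeasurable y μ) {R G : ℝ}
    (hxR : ∀ᵐ ω ∂μ, ‖x ω‖ ≤ R) (hyG : ∀ᵐ ω ∂μ, ‖y ω‖ ≤ G)
    (hunb : μ[y | m] =ᵐ[μ] fun ω => gradient L (x ω)) (η : ℝ) :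
    ∫ ω, L (x ω - η • y ω) ∂μ + η * ∫ ω, ‖gradient L (x ω)‖ ^ 2 ∂μ
      ≤ ∫ ω, L (x ω) ∂μ + K * G ^ 2 * μ.real univ * η ^ 2 := by
  have hLc := hL.continuous
  have hgc := hLip.continuous
  have hxy : AEStronglyMeasurable (fun ω => (x ω, y ω)) μ :=
    (hx.mono hm).aestronglyMeasurable.prodMk hy
  have hxyR : ∀ᵐ ω ∂μ, ‖(x ω, y ω)‖ ≤ max R G := by
    filter_upwards [hxR, hyG] with ω h1 h2
    exact max_le_max h1 h2
  have hint {F : E × E → ℝ} (hF : Continuous F) : Integrable (fun ω => F (x ω, y ω)) μ :=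
    integrable_comp_of_ae_norm_le hF hxy hxyR
  have iL₁ : Integrable (fun ω => L (x ω - η • y ω)) μ :=
    hint (F := fun p => L (p.1 - η • p.2)) (by fun_prop)
  have iL₀ : Integrable (fun ω => L (x ω)) μ := hint (F := fun p => L p.1) (by fun_prop)
  have iI : Integrable (fun ω => ⟪gradient L (x ω), y ω⟫_ℝ) μ :=
    hint (F := fun p => ⟪gradient L p.1, p.2⟫_ℝ) (by fun_prop)
  have iy : Integrable (fun ω => ‖y ω‖ ^ 2) μ := hint (F := fun p => ‖p.2‖ ^ 2) (by fun_prop)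
  have iLI : Integrable (fun ω => L (x ω) - η * ⟪gradient L (x ω), y ω⟫_ℝ) μ :=
    iL₀.sub (iI.const_mul η)
  have hpoint : ∀ ω, L (x ω - η • y ω) ≤ L (x ω) - η * ⟪gradient L (x ω), y ω⟫_ℝ
      + K * η ^ 2 * ‖y ω‖ ^ 2 := by
    intro ω
    have h := le_add_inner_gradient_add_mul_norm_sq hL hLip (x ω) (x ω - η • y ω)
    rw [sub_sub_cancel_left, inner_neg_right, real_inner_smul_right, norm_neg, norm_smul,
      Real.norm_eq_abs, mul_pow, sq_abs] at h
    linarith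
  have hinner : ∫ ω, ⟪gradient L (x ω), y ω⟫_ℝ ∂μ = ∫ ω, ‖gradient L (x ω)‖ ^ 2 ∂μ := by
    rw [integral_inner_condExp hm (hgc.comp_stronglyMeasurable hx) iI (.of_bound hy G hyG)]
    refine integral_congr_ae ?_
    filter_upwards [hunb] with ω hω
    rw [hω, real_inner_self_eq_norm_sq]
  have hnorm : ∫ ω, ‖y ω‖ ^ 2 ∂μ ≤ G ^ 2 * μ.real univ := by
    rw [mul_comm, ← smul_eq_mul, ← integral_const]
    refine integral_mono_ae iy (integrable_const _) ?_
    filter_upwards [hyG] with ω hω using pow_le_pow_left₀ (norm_nonneg _) hω 2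
  calc ∫ ω, L (x ω - η • y ω) ∂μ + η * ∫ ω, ‖gradient L (x ω)‖ ^ 2 ∂μ
      ≤ ∫ ω, (L (x ω) - η * ⟪gradient L (x ω), y ω⟫_ℝ + K * η ^ 2 * ‖y ω‖ ^ 2) ∂μ
        + η * ∫ ω, ‖gradient L (x ω)‖ ^ 2 ∂μ := by
        gcongr ?_ + _
        exact integral_mono iL₁ (iLI.add (iy.const_mul _)) hpoint
    _ = ∫ ω, L (x ω) ∂μ + K * η ^ 2 * ∫ ω, ‖y ω‖ ^ 2 ∂μ := by
        rw [integral_add iLI (iy.const_mul _), integral_sub iL₀ (iI.const_mul η),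
          integral_const_mul, integral_const_mul, hinner]
        ring
    _ ≤ ∫ ω, L (x ω) ∂μ + K * G ^ 2 * μ.real univ * η ^ 2 := by
        have : K * η ^ 2 * ∫ ω, ‖y ω‖ ^ 2 ∂μ ≤ K * η ^ 2 * (G ^ 2 * μ.real univ) := by gcongr
        linarith

theorem ae_summable_mul_norm_gradient_sq [IsFiniteMeasure μ] (ℱ : Filtration ℕ m0) {L : E → ℝ}
    (hL : Differentiable ℝ L) (hLbdd : BddBelow (range L)) {K : ℝ≥0}
    (hLip : LipschitzWith K (gradient L)) {φ g : ℕ → Ω → E}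
    (hφ : ∀ t, StronglyMeasurable[ℱ t] (φ t)) (hg : ∀ t, AEStronglyMeasurable (g t) μ)
    {η : ℕ → ℝ} (hη : ∀ t, 0 ≤ η t) (hη2 : Summable fun t => η t ^ 2)
    (hrec : ∀ t ω, φ (t + 1) ω = φ t ω - η t • g t ω)
    (hunb : ∀ t, μ[g t | ℱ t] =ᵐ[μ] fun ω => gradient L (φ t ω))
    {G : ℝ} (hG : ∀ t, ∀ᵐ ω ∂μ, ‖g t ω‖ ≤ G) {R₀ : ℝ} (hφ₀ : ∀ᵐ ω ∂μ, ‖φ 0 ω‖ ≤ R₀) :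
    ∀ᵐ ω ∂μ, Summable fun t => η t * ‖gradient L (φ t ω)‖ ^ 2 := by
  have hbdd : ∀ t, ∃ R, ∀ᵐ ω ∂μ, ‖φ t ω‖ ≤ R := by
    intro t
    induction t with
    | zero => exact ⟨R₀, hφ₀⟩
    | succ t ih =>
      obtain ⟨R, hR⟩ := ih
      refine ⟨R + η t * G, ?_⟩
      filter_upwards [hR, hG t] with ω hφω hgω
      rw [hrec]
      refine (norm_sub_le _ _).trans ?_
      rw [norm_smul, Real.norm_of_nonneg (hη t)]
      gcongr
      exact hη t
  choose R hR using hbdd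
  have hmeas (t : ℕ) : StronglyMeasurable (φ t) := (hφ t).mono (ℱ.le t)
  have iL (t : ℕ) : Integrable (fun ω => L (φ t ω)) μ :=
    integrable_comp_of_ae_norm_le hL.continuous (hmeas t).aestronglyMeasurable (hR t)
  have iJ (t : ℕ) : Integrable (fun ω => ‖gradient L (φ t ω)‖ ^ 2) μ :=
    integrable_comp_of_ae_norm_le (hLip.continuous.norm.pow 2) (hmeas t).aestronglyMeasurable
      (hR t)
  have hstep (t : ℕ) : ∫ ω, L (φ (t + 1) ω) ∂μ + η t * ∫ ω, ‖gradient L (φ t ω)‖ ^ 2 ∂μ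
      ≤ ∫ ω, L (φ t ω) ∂μ + K * G ^ 2 * μ.real univ * η t ^ 2 := by
    simp only [hrec]
    exact integral_sgd_step_le (ℱ.le t) hL hLip (hφ t) (hg t) (hR t) (hG t) (hunb t) (η t)
  have hlow : BddBelow (range fun t => ∫ ω, L (φ t ω) ∂μ) := by
    obtain ⟨b, hb⟩ := hLbdd
    refine ⟨b * μ.real univ, forall_mem_range.2 fun t => ?_⟩
    rw [mul_comm, ← smul_eq_mul, ← integral_const]
    exact integral_mono (integrable_const b) (iL t) fun ω => hb (mem_range_self _)
  have hsum := summable_of_add_le_add hlow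
    (fun t => mul_nonneg (hη t) (integral_nonneg fun ω => sq_nonneg _)) (hη2.mul_left _)
    (fun t => mul_nonneg (mul_nonneg (by positivity) measureReal_nonneg) (sq_nonneg _)) hstep
  refine ae_summable_of_summable_integral
    (fun t => .of_forall fun ω => mul_nonneg (hη t) (sq_nonneg _))
    (fun t => (iJ t).const_mul (η t)) ?_
  simpa only [integral_const_mul] using hsum

end Probability

theorem convergence_to_stationarity_almost_sure_general {d : ℕ}
    {Ω : Type*} {𝒜 : MeasurableSpace Ω} (μ : Measure Ω) [IsProbabilityMeasure μ]
    (ℱ : Filtration ℕ 𝒜)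
    (L : EuclideanSpace ℝ (Fin d) → ℝ) (hLdiff : ContDiff ℝ 1 L)
    (hLbdd : BddBelow (Set.range L))
    (β : ℝ) (hβ : 0 < β)
    (hLip : ∀ x y, ‖gradient L x - gradient L y‖ ≤ β * ‖x - y‖)
    (φ g : ℕ → Ω → EuclideanSpace ℝ (Fin d))
    (hφmeas : ∀ t, Measurable[ℱ t] (φ t))
    (hgmeas : ∀ t, Measurable[ℱ (t + 1)] (g t))
    (η : ℕ → ℝ) (hη0 : ∀ t, 0 < η t)
    (hηlim : Tendsto η atTop (nhds 0))
    (hηdiv : Tendsto (fun n => ∑ t ∈ Finset.range n, η t) atTop atTop)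
    (hη2 : Summable fun t => (η t) ^ 2)
    (hrec : ∀ t ω, φ (t + 1) ω = φ t ω - η t • g t ω)
    (hunb : ∀ t, μ[g t | ℱ t] =ᵐ[μ] fun ω => gradient L (φ t ω))
    (G : ℝ) (hGbd : ∀ t, ∀ᵐ ω ∂μ, ‖g t ω‖ ≤ G) :
    ∀ᵐ ω ∂μ, Tendsto (fun t => ‖gradient L (φ t ω)‖) atTop (nhds 0) := by
  have hLip' : LipschitzWith β.toNNReal (gradient L) :=
    .of_dist_le' fun x y => by simpa only [dist_eq_norm] using hLip x y
  have hgint (t : ℕ) : Integrable (g t) μ :=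
    .of_bound ((hgmeas t).mono (ℱ.le _) le_rfl).aestronglyMeasurable G (hGbd t)
  have hA (N : ℕ) : MeasurableSet[ℱ 0] {ω | ‖φ 0 ω‖ ≤ N} :=
    measurable_norm.comp (hφmeas 0) measurableSet_Iic
  have hsum : ∀ᵐ ω ∂μ, Summable fun t => η t * ‖gradient L (φ t ω)‖ ^ 2 := by
    refine ae_of_forall_ae_restrict_norm_le (X := φ 0) fun N => ?_
    refine ae_summable_mul_norm_gradient_sq ℱ (hLdiff.differentiable one_ne_zero) hLbdd hLip'
      (fun t => (hφmeas t).stronglyMeasurable) (fun t => (hgint t).1.restrict)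
      (fun t => (hη0 t).le) hη2 hrec (fun t => ?_) (fun t => ae_restrict_of_ae (hGbd t))
      (ae_restrict_mem (ℱ.le 0 _ (hA N)))
    exact (condExp_restrict_ae_eq_restrict (ℱ.le t) (ℱ.mono (Nat.zero_le t) _ (hA N))
      (hgint t)).trans (ae_restrict_of_ae (hunb t))
  filter_upwards [hsum, ae_all_iff.2 hGbd] with ω hω hgω
  refine tendsto_zero_of_summable_mul_sq (K := β * G) (fun t => norm_nonneg _) (fun t => ?_)
    (fun t => (hη0 t).le) hηlim hηdiv hω
  calc |‖gradient L (φ (t + 1) ω)‖ - ‖gradient L (φ t ω)‖|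
      ≤ ‖gradient L (φ (t + 1) ω) - gradient L (φ t ω)‖ := abs_norm_sub_norm_le _ _
    _ ≤ β * ‖φ (t + 1) ω - φ t ω‖ := hLip _ _
    _ ≤ β * G * η t := by
        rw [hrec, sub_sub_cancel_left, norm_neg, norm_smul, Real.norm_of_nonneg (hη0 t).le,
          mul_assoc, mul_comm G]
        gcongr
        exacts [(hη0 t).le, hgω t]

/-- **Convergence to stationarity, almost-sure form.** For the stochastic gradient
recursion `φ (t+1) = φ t - η t • g t` with `L` continuously differentiable, bounded
below, with `β`-Lipschitz gradient, diminishing step sizes `0 < η t ≤ 1/β`, `η t → 0`,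
`∑ η t = ∞`, `∑ (η t)² < ∞`, conditionally unbiased estimators `E[g t | ℱ t] = ∇L(φ t)`
with conditional variance bound `v` and a.s. norm bound `G`, the gradients vanish
almost surely: `P(lim_t ‖∇L(φ t)‖ = 0) = 1`. -/
theorem convergence_to_stationarity_almost_sure {d : ℕ}
    {Ω : Type*} {𝒜 : MeasurableSpace Ω} (μ : Measure Ω) [IsProbabilityMeasure μ]
    (ℱ : Filtration ℕ 𝒜)
    (L : EuclideanSpace ℝ (Fin d) → ℝ) (hLdiff : ContDiff ℝ 1 L)
    (hLbdd : BddBelow (Set.range L))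
    (β : ℝ) (hβ : 0 < β)
    (hLip : ∀ x y, ‖gradient L x - gradient L y‖ ≤ β * ‖x - y‖)
    (φ g : ℕ → Ω → EuclideanSpace ℝ (Fin d))
    (hφmeas : ∀ t, Measurable[ℱ t] (φ t))
    (hgmeas : ∀ t, Measurable[ℱ (t + 1)] (g t))
    (η : ℕ → ℝ) (hη0 : ∀ t, 0 < η t) (hηβ : ∀ t, η t ≤ 1 / β)
    (hηlim : Tendsto η atTop (nhds 0))
    (hηdiv : Tendsto (fun n => ∑ t ∈ Finset.range n, η t) atTop atTop)
    (hη2 : Summable fun t => (η t) ^ 2)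
    (hrec : ∀ t ω, φ (t + 1) ω = φ t ω - η t • g t ω)
    (v : ℝ) (hv : 0 ≤ v)
    (hunb : ∀ t, μ[g t | ℱ t] =ᵐ[μ] fun ω => gradient L (φ t ω))
    (hvar : ∀ t, ∀ᵐ ω ∂μ,
      (μ[fun ω' => ‖g t ω' - gradient L (φ t ω')‖ ^ 2 | ℱ t]) ω ≤ v)
    (G : ℝ) (hG : 0 ≤ G) (hGbd : ∀ t, ∀ᵐ ω ∂μ, ‖g t ω‖ ≤ G) :
    ∀ᵐ ω ∂μ, Tendsto (fun t => ‖gradient L (φ t ω)‖) atTop (nhds 0) :=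
  convergence_to_stationarity_almost_sure_general μ ℱ L hLdiff hLbdd β hβ hLip φ g hφmeas hgmeas η
    hη0 hηlim hηdiv hη2 hrec hunb G hGbd
end
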